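/- Constant-variance corollary: suppose Var[U_θ] = b for all θ ∈ Θ (constant empirical variance), with the ideal prior p_i = U_{θ̃}(X_i)/C, C = Σ_j U_{θ̃}(X_j) > 0, and θ̃ maximizing U(θ) = (1/N)Σ_i U_θ(X_i). Then θ̃ maximizes U_p(θ) = Σ_i U_θ(X_i)p_i over Θ; i.e., U_p(θ) ≤ U_p(θ̃) for all θ. -/

import Mathlib

/-!
Write `u = U θ ∘ X` and `v = U θ̃ ∘ X`. Since `p ∝ v`, comparing `U_p(θ)` with `U_p(θ̃)` amounts to
comparing `∑ u v` with `∑ v v`. Splitting off the means, `∑ u v = Cov(u, v) + N ū v̄`. By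
Cauchy–Schwarz and the constant variance, `Cov(u, v) ≤ √(Var u) √(Var v) = Var v = Cov(v, v)`,
and `ū ≤ v̄` with `v̄ ≥ 0` gives `N ū v̄ ≤ N v̄ v̄`.
-/

open Finset BigOperators

section EmpiricalMoments

variable {ι : Type*} [Fintype ι]

-- Unnormalised, as in the paper: sums of deviation products rather than averages.
noncomputable def empiricalVar (u : ι → ℝ) : ℝ :=
  ∑ i, (u i - 𝔼 j, u j) ^ 2

noncomputable def empiricalCov (u v : ι → ℝ) : ℝ :=
  ∑ i, (u i - 𝔼 j, u j) * (v i - 𝔼 j, v j)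

lemma empiricalVar_nonneg (u : ι → ℝ) : 0 ≤ empiricalVar u :=
  sum_nonneg fun _ _ ↦ sq_nonneg _

lemma empiricalCov_self (u : ι → ℝ) : empiricalCov u u = empiricalVar u := by
  simp only [empiricalCov, empiricalVar, sq]

lemma sum_mul_eq_empiricalCov_add (u v : ι → ℝ) :
    ∑ i, u i * v i = empiricalCov u v + Fintype.card ι * (𝔼 i, u i) * 𝔼 i, v i := by
  have hu := Fintype.card_mul_expect u
  have hv := Fintype.card_mul_expect v
  simp only [empiricalCov, sub_mul, mul_sub, sum_sub_distrib, ← sum_mul, ← mul_sum, sum_const,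
    card_univ, nsmul_eq_mul, hu.symm, hv.symm]
  ring

lemma empiricalCov_le_sqrt_mul_sqrt (u v : ι → ℝ) :
    empiricalCov u v ≤ √(empiricalVar u) * √(empiricalVar v) :=
  Real.sum_mul_le_sqrt_mul_sqrt _ _ _

lemma sum_mul_le_sum_mul_self_of_empiricalVar_eq {u v : ι → ℝ}
    (hvar : empiricalVar u = empiricalVar v) (hmean : 𝔼 i, u i ≤ 𝔼 i, v i)
    (hmean_nonneg : 0 ≤ 𝔼 i, v i) :
    ∑ i, u i * v i ≤ ∑ i, v i * v i := by
  have hcov : empiricalCov u v ≤ empiricalCov v v := by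
    calc empiricalCov u v ≤ √(empiricalVar u) * √(empiricalVar v) :=
          empiricalCov_le_sqrt_mul_sqrt u v
      _ = empiricalCov v v := by
          rw [hvar, Real.mul_self_sqrt (empiricalVar_nonneg v), empiricalCov_self]
  rw [sum_mul_eq_empiricalCov_add, sum_mul_eq_empiricalCov_add]
  gcongr

end EmpiricalMoments

theorem constant_variance_corollary_general {Θ 𝒳 : Type*} (N : ℕ)
    (X : Fin N → 𝒳) (U : Θ → 𝒳 → ℝ) (θt : Θ)
    (C : ℝ) (hC : C = ∑ j, U θt (X j)) (hCpos : 0 < C)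
    (p : Fin N → ℝ) (hp : ∀ i, p i = U θt (X i) / C)
    (Ubar : Θ → ℝ) (hUbar : ∀ θ, Ubar θ = (1 / N) * ∑ i, U θ (X i))
    (hmax : ∀ θ, Ubar θ ≤ Ubar θt)
    (b : ℝ)
    (hvar : ∀ θ, ∑ i, (U θ (X i) - Ubar θ) ^ 2 = b) :
    ∀ θ, ∑ i, U θ (X i) * p i ≤ ∑ i, U θt (X i) * p i := by
  intro θ
  have hmean (θ : Θ) : Ubar θ = 𝔼 i, U θ (X i) := by
    rw [hUbar, Fintype.expect_eq_sum_div_card, Fintype.card_fin, one_div_mul_eq_div]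
  have hvar' (θ : Θ) : empiricalVar (fun i ↦ U θ (X i)) = b := by
    rw [empiricalVar, ← hmean, hvar]
  have hpair : ∑ i, U θ (X i) * U θt (X i) ≤ ∑ i, U θt (X i) * U θt (X i) := by
    refine sum_mul_le_sum_mul_self_of_empiricalVar_eq (by rw [hvar', hvar'])
      (by simpa only [hmean] using hmax θ) ?_
    rw [Fintype.expect_eq_sum_div_card, ← hC]
    positivity
  simp only [hp, mul_div_assoc', ← sum_div]
  exact div_le_div_of_nonneg_right hpair hCpos.le

theorem constant_variance_corollary {Θ 𝒳 : Type*} (N : ℕ) (hN : 0 < N)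
    (X : Fin N → 𝒳) (U : Θ → 𝒳 → ℝ) (θt : Θ)
    (hpos : ∀ θ i, 0 < U θ (X i))
    (C : ℝ) (hC : C = ∑ j, U θt (X j)) (hCpos : 0 < C)
    (p : Fin N → ℝ) (hp : ∀ i, p i = U θt (X i) / C)
    (Ubar : Θ → ℝ) (hUbar : ∀ θ, Ubar θ = (1 / N) * ∑ i, U θ (X i))
    (hmax : ∀ θ, Ubar θ ≤ Ubar θt)
    (b : ℝ)
    (hvar : ∀ θ, ∑ i, (U θ (X i) - Ubar θ) ^ 2 = b) :
    ∀ θ, ∑ i, U θ (X i) * p i ≤ ∑ i, U θt (X i) * p i :=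
  constant_variance_corollary_general N X U θt C hC hCpos p hp Ubar hUbar hmax b hvar
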